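/- Let n be a positive integer and let A = {a_1 < a_2 < … < a_n} be a set of n distinct positive integers. Then A is a Skolem set (i.e., the set {1, 2, …, 2n} can be partitioned into n pairs (s_i, t_i) with t_i − s_i = a_i) if and only if there exists a fixed-point-free involution π of {1, …, 2n} whose diagonal X-ray d(π) = (d_1, …, d_{4n−1}) satisfies d_k = 1 if k ∈ {2n − a_1, …, 2n − a_n} ∪ {2n + a_1, …, 2n + a_n} and d_k = 0 otherwise. -/

import Mathlib

/-!
A fixed-point-free involution `π` of `{1, …, 2n}` is a perfect matching, and its diagonal X-ray
counts the displacements `i - π i`, which on a matched pair `{s < t}` are `±(t - s)`. The X-ray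
condition therefore says that the displacement is injective with image `±A`. Since `±A` has
exactly `2n` elements, the displacement identifies the positions with two copies of `A`, and
reading the position of displacement `a_j` together with its partner gives the Skolem pair of
`a_j`; conversely a Skolem partition, viewed as a bijection from two copies of `A` onto the
positions, yields the involution exchanging the copies.
-/

/-- The multiset of all endpoints of the pairs `(s i, t i)`. -/
def pairsMultiset (n : ℕ) (s t : Fin n → ℕ) : Multiset ℕ :=
  (Finset.univ : Finset (Fin n)).val.bind fun i => {s i, t i}

/-- The pairs `(s i, t i)` form a partition of `{1, 2, …, 2n}`. -/
def IsPartitionOfIcc (n : ℕ) (s t : Fin n → ℕ) : Prop :=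
  pairsMultiset n s t = Multiset.map (· + 1) (Multiset.range (2 * n))

/-- The `k`-th entry (`k = 1, …, 2m-1`) of the diagonal (Toeplitz) X-ray of a
permutation `π` of `{1, …, m}` (encoded 0-based on `Fin m`):
`d_k = #{i : i - π(i) = m - k}`. -/
def diagXray (m : ℕ) (π : Equiv.Perm (Fin m)) (k : ℤ) : ℕ :=
  (Finset.univ.filter fun i : Fin m =>
    ((i : ℕ) : ℤ) - ((π i : ℕ) : ℤ) = (m : ℤ) - k).card

open Finset Function

lemma pairsMultiset_eq_map_sumElim (n : ℕ) (s t : Fin n → ℕ) :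
    pairsMultiset n s t = (univ : Finset (Fin n ⊕ Fin n)).val.map (Sum.elim s t) := by
  rw [← univ_disjSum_univ, val_disjSum, Multiset.disjSum, Multiset.map_add, Multiset.map_map,
    Multiset.map_map, pairsMultiset, ← Multiset.bind_singleton, ← Multiset.bind_singleton,
    ← Multiset.bind_add]
  rfl

lemma map_univ_val_eq_map_succ_range_iff {ι : Type*} [Fintype ι] (f : ι → ℕ) (m : ℕ) :
    (univ : Finset ι).val.map f = (Multiset.range m).map (· + 1) ↔
      ∃ e : ι ≃ Fin m, ∀ x, f x = e x + 1 := by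
  constructor
  · intro h
    have hmem : ∀ x, 1 ≤ f x ∧ f x - 1 < m := fun x => by
      have := h ▸ Multiset.mem_map_of_mem f (mem_univ_val x)
      obtain ⟨y, hy, hyx⟩ := Multiset.mem_map.1 this
      rw [Multiset.mem_range] at hy
      omega
    have hinj : Injective f := by
      have hnodup : ((univ : Finset ι).val.map f).Nodup :=
        h ▸ (Multiset.nodup_range m).map (add_left_injective 1)
      exact fun x y hxy => (Multiset.nodup_map_iff_inj_on univ.nodup).1 hnodup x
        (mem_univ_val x) y (mem_univ_val y) hxy
    have hcard : Fintype.card ι = m := by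
      simpa using congrArg Multiset.card h
    let g : ι → Fin m := fun x => ⟨f x - 1, (hmem x).2⟩
    have hg : Bijective g := (Fintype.bijective_iff_injective_and_card g).2
      ⟨fun x y hxy => hinj (by
          have := (hmem x).1
          have := (hmem y).1
          rw [Fin.mk.injEq] at hxy
          omega), by simp [hcard]⟩
    exact ⟨Equiv.ofBijective g hg, fun x => by
      rw [Equiv.ofBijective_apply]
      have := (hmem x).1
      dsimp only [g]
      omega⟩
  · rintro ⟨e, he⟩
    rw [show f = (· + 1) ∘ Fin.val ∘ e from funext he, ← Multiset.map_map, ← Multiset.map_map,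
      Multiset.map_univ_val_equiv, ← range_val, ← Nat.Iio_eq_range, ← Fin.map_valEmbedding_univ]
    rfl

section Displacement

variable {m : ℕ} (π : Equiv.Perm (Fin m))

def displacement (i : Fin m) : ℤ := ((i : ℕ) : ℤ) - ((π i : ℕ) : ℤ)

lemma diagXray_eq_card_displacement (k : ℤ) :
    diagXray m π k = #{i | displacement π i = m - k} := rfl

lemma abs_displacement_lt (i : Fin m) : |displacement π i| < m := by
  have := i.isLt
  have := (π i).isLt
  rw [displacement, abs_lt]
  omega

variable {π}

lemma displacement_apply_of_involutive (hπ : ∀ i, π (π i) = i) (i : Fin m) :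
    displacement π (π i) = -displacement π i := by
  rw [displacement, displacement, hπ, neg_sub]

lemma diagXray_eq_ite_of_injective (hd : Injective (displacement π)) (k : ℤ) :
    diagXray m π k = if (m : ℤ) - k ∈ univ.image (displacement π) then 1 else 0 := by
  rw [diagXray_eq_card_displacement]
  split_ifs with h
  · obtain ⟨i, -, hi⟩ := mem_image.1 h
    rw [card_eq_one]
    exact ⟨i, by ext j; simp [← hi, hd.eq_iff]⟩
  · rw [card_eq_zero, filter_eq_empty_iff]
    exact fun i _ hi => h (mem_image.2 ⟨i, mem_univ i, hi⟩)

lemma injective_displacement_and_image_eq_of_diagXray {S : Finset ℤ} (hS : #S ≤ m)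
    (hx : ∀ k : ℕ, 1 ≤ k → k ≤ 2 * m - 1 →
      diagXray m π k = if (m : ℤ) - k ∈ S then 1 else 0) :
    Injective (displacement π) ∧ univ.image (displacement π) = S := by
  have hfiber : ∀ i, displacement π i ∈ S ∧ #{j | displacement π j = displacement π i} = 1 := by
    intro i
    have hlt := abs_lt.1 (abs_displacement_lt π i)
    have hk := hx (m - displacement π i).toNat (by omega) (by omega)
    rw [diagXray_eq_card_displacement, Int.toNat_of_nonneg (by omega), sub_sub_cancel] at hk
    have hpos : 0 < #{j | displacement π j = displacement π i} :=
      card_pos.2 ⟨i, by simp⟩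
    split_ifs at hk with hS
    exacts [⟨hS, hk⟩, absurd hk hpos.ne']
  have hd : Injective (displacement π) := fun i j hij =>
    card_le_one.1 (hfiber j).2.le _ (by simp [hij]) _ (by simp)
  refine ⟨hd, ?_⟩
  have hsub : univ.image (displacement π) ⊆ S := by
    simpa [subset_iff] using fun i => (hfiber i).1
  exact eq_of_subset_of_card_le hsub
    (by rwa [card_image_of_injective _ hd, card_univ, Fintype.card_fin])

end Displacement

section Pairing

variable {ι : Type*} {m : ℕ} (a : ι → ℕ)

-- `e (.inl j)` and `e (.inr j)` are the 0-based positions `s j - 1` and `t j - 1`.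
def IsSkolemPairing (e : ι ⊕ ι ≃ Fin m) : Prop :=
  ∀ j, (e (.inr j) : ℕ) = e (.inl j) + a j

def signedGaps : ι ⊕ ι → ℤ := Sum.elim (fun j => -(a j : ℤ)) (fun j => (a j : ℤ))

variable {a}

lemma signedGaps_injective (ha : Injective a) (ha_pos : ∀ j, 0 < a j) :
    Injective (signedGaps a) := by
  have hpos : ∀ j, (0 : ℤ) < a j := fun j => by exact_mod_cast ha_pos j
  rintro (i | i) (j | j) h <;> simp only [signedGaps, Sum.elim_inl, Sum.elim_inr] at h
  · exact congrArg _ (ha (by omega))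
  · linarith [hpos i, hpos j]
  · linarith [hpos i, hpos j]
  · exact congrArg _ (ha (by omega))

lemma displacement_permCongr_sumComm {e : ι ⊕ ι ≃ Fin m} (he : IsSkolemPairing a e) :
    displacement (e.permCongr (Equiv.sumComm ι ι)) = signedGaps a ∘ e.symm := by
  ext i
  obtain ⟨j | j, rfl⟩ := e.surjective i <;>
    simp [displacement, Equiv.permCongr_apply, signedGaps, he j]

lemma exists_isSkolemPairing_of_image_displacement [Fintype ι] {π : Equiv.Perm (Fin m)}
    (hπ : ∀ i, π (π i) = i) (hd : Injective (displacement π)) (hσ : Injective (signedGaps a))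
    (himage : univ.image (displacement π) = univ.image (signedGaps a)) :
    ∃ e : ι ⊕ ι ≃ Fin m, IsSkolemPairing a e := by
  have hrange : Set.range (displacement π) = Set.range (signedGaps a) := by
    simpa using congrArg ((↑) : Finset ℤ → Set ℤ) himage
  let e : ι ⊕ ι ≃ Fin m := (Equiv.ofInjective _ hσ).trans
    ((Equiv.setCongr hrange.symm).trans (Equiv.ofInjective _ hd).symm)
  have he : ∀ x, displacement π (e x) = signedGaps a x := fun x =>
    Equiv.apply_ofInjective_symm hd _
  have hswap : ∀ j, π (e (.inl j)) = e (.inr j) := fun j => hd <| by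
    rw [displacement_apply_of_involutive hπ, he, he]
    simp [signedGaps]
  refine ⟨e, fun j => ?_⟩
  have hback : π (e (.inr j)) = e (.inl j) := by rw [← hswap, hπ]
  have := he (.inr j)
  rw [displacement, hback] at this
  simp only [signedGaps, Sum.elim_inr] at this
  omega

end Pairing

lemma exists_skolem_iff_exists_isSkolemPairing (n : ℕ) (a : Fin n → ℕ) :
    (∃ s t : Fin n → ℕ, IsPartitionOfIcc n s t ∧ ∀ i, t i = s i + a i) ↔
      ∃ e : Fin n ⊕ Fin n ≃ Fin (2 * n), IsSkolemPairing a e := by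
  simp only [IsPartitionOfIcc, pairsMultiset_eq_map_sumElim, map_univ_val_eq_map_succ_range_iff]
  constructor
  · rintro ⟨s, t, ⟨e, he⟩, hst⟩
    refine ⟨e, fun j => ?_⟩
    have := he (.inl j)
    have := he (.inr j)
    have := hst j
    simp only [Sum.elim_inl, Sum.elim_inr] at *
    omega
  · rintro ⟨e, he⟩
    refine ⟨fun j => e (.inl j) + 1, fun j => e (.inr j) + 1, ⟨e, ?_⟩, fun j => ?_⟩
    · rintro (j | j) <;> rfl
    · simp only [he j]
      ring

theorem stmt3_general (n : ℕ) (a : Fin n → ℕ)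
    (ha_pos : ∀ i, 0 < a i) (ha_mono : StrictMono a) :
    (∃ s t : Fin n → ℕ, IsPartitionOfIcc n s t ∧ ∀ i, t i = s i + a i) ↔
      ∃ π : Equiv.Perm (Fin (2 * n)), (∀ i, π (π i) = i) ∧ (∀ i, π i ≠ i) ∧
        ∀ k : ℕ, 1 ≤ k → k ≤ 4 * n - 1 →
          diagXray (2 * n) π k =
            if ∃ i, (k : ℤ) = 2 * n - a i ∨ (k : ℤ) = 2 * n + a i then 1 else 0 := by
  have hσ := signedGaps_injective ha_mono.injective ha_pos
  have hmem : ∀ k : ℕ, (∃ i, (k : ℤ) = 2 * n - a i ∨ (k : ℤ) = 2 * n + a i) ↔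
      ((2 * n : ℕ) : ℤ) - k ∈ univ.image (signedGaps a) := fun k => by
    simp only [mem_image, mem_univ, true_and, Sum.exists, signedGaps, Sum.elim_inl, Sum.elim_inr,
      ← exists_or]
    push_cast
    exact exists_congr fun i => by omega
  simp only [hmem]
  rw [exists_skolem_iff_exists_isSkolemPairing]
  constructor
  · rintro ⟨e, he⟩
    have hd := displacement_permCongr_sumComm he
    refine ⟨e.permCongr (Equiv.sumComm _ _), fun i => by simp, fun i => ?_, fun k _ _ => ?_⟩
    · obtain ⟨x, rfl⟩ := e.surjective i
      rcases x with j | j <;> simp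
    · rw [diagXray_eq_ite_of_injective (hd ▸ hσ.comp e.symm.injective), hd, ← image_image,
        image_univ_equiv]
  · rintro ⟨π, hπ, -, hx⟩
    have hcard : #(univ.image (signedGaps a)) ≤ 2 * n :=
      card_image_le.trans (by rw [card_univ, Fintype.card_sum, Fintype.card_fin, two_mul])
    obtain ⟨hd, himage⟩ := injective_displacement_and_image_eq_of_diagXray hcard
      (fun k h1 h2 => hx k h1 (by omega))
    exact exists_isSkolemPairing_of_image_displacement hπ hd hσ himage

theorem stmt3 (n : ℕ) (hn : 0 < n) (a : Fin n → ℕ)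
    (ha_pos : ∀ i, 0 < a i) (ha_mono : StrictMono a) :
    (∃ s t : Fin n → ℕ, IsPartitionOfIcc n s t ∧ ∀ i, t i = s i + a i) ↔
      ∃ π : Equiv.Perm (Fin (2 * n)), (∀ i, π (π i) = i) ∧ (∀ i, π i ≠ i) ∧
        ∀ k : ℕ, 1 ≤ k → k ≤ 4 * n - 1 →
          diagXray (2 * n) π k =
            if ∃ i, (k : ℤ) = 2 * n - a i ∨ (k : ℤ) = 2 * n + a i then 1 else 0 :=
  stmt3_general n a ha_pos ha_mono
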